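/- Let X̂_σ : H⊕H → H⊕H denote the operator (v₀, v₁) ↦ (v₁, v₀) (the action of σ_X ⊗ 1 under the identification ℂ²⊗H ≅ H⊕H). Then for every vector ψ ∈ H, ‖V X̃ ψ − X̂_σ V ψ‖² = ‖(P⁰X̃ − X̃P¹)ψ‖² + ‖(P¹X̃ − X̃P⁰)ψ‖². -/

import Mathlib

/-- The projection `P⁰ = (1 + Z̃)/2`. -/
noncomputable def Pb0 {H : Type*} [AddCommGroup H] [Module ℂ H]
    (Zt : H →ₗ[ℂ] H) : H →ₗ[ℂ] H := ((1 : ℂ) / 2) • (1 + Zt)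

/-- The projection `P¹ = (1 − Z̃)/2`. -/
noncomputable def Pb1 {H : Type*} [AddCommGroup H] [Module ℂ H]
    (Zt : H →ₗ[ℂ] H) : H →ₗ[ℂ] H := ((1 : ℂ) / 2) • (1 - Zt)

/-- The SWAP-gate map `V : H → H⊕H`, `Vψ = (P⁰ψ, X̃P¹ψ)`. -/
noncomputable def VL {H : Type*} [AddCommGroup H] [Module ℂ H]
    (Zt Xt : H →ₗ[ℂ] H) : H →ₗ[ℂ] WithLp 2 (H × H) :=
  (WithLp.linearEquiv 2 ℂ (H × H)).symm.toLinearMap ∘ₗ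
    LinearMap.prod (Pb0 Zt) (Xt ∘ₗ Pb1 Zt)

/-- The operator `σ_X ⊗ 1` on `H⊕H`: `(v₀, v₁) ↦ (v₁, v₀)`. -/
noncomputable def Xsig {H : Type*} [AddCommGroup H] [Module ℂ H] :
    WithLp 2 (H × H) →ₗ[ℂ] WithLp 2 (H × H) :=
  (WithLp.linearEquiv 2 ℂ (H × H)).symm.toLinearMap ∘ₗ
    LinearMap.prod (LinearMap.snd ℂ H H) (LinearMap.fst ℂ H H) ∘ₗ
      (WithLp.linearEquiv 2 ℂ (H × H)).toLinearMap

/-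
The first component of `V X̃ ψ − X̂_σ V ψ` is `(P⁰X̃ − X̃P¹)ψ` on the nose; the second is
`X̃P¹X̃ψ − P⁰ψ = X̃ (P¹X̃ − X̃P⁰)ψ` because `X̃² = 1`, and `X̃` is an isometry since it is a
self-adjoint involution. The norm on `H ⊕ H` is the ℓ² norm of the two components.
-/

theorem LinearMap.IsSymmetric.norm_map_of_mul_self_eq_one {𝕜 E : Type*} [RCLike 𝕜]
    [NormedAddCommGroup E] [InnerProductSpace 𝕜 E] {T : E →ₗ[𝕜] E} (hT : T.IsSymmetric)
    (hT2 : T * T = 1) (v : E) : ‖T v‖ = ‖v‖ := by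
  have hinner : inner 𝕜 (T v) (T v) = inner 𝕜 v v := by
    rw [hT, ← Module.End.mul_apply, hT2, Module.End.one_apply]
  rw [inner_self_eq_norm_sq_to_K, inner_self_eq_norm_sq_to_K] at hinner
  exact (sq_eq_sq₀ (norm_nonneg _) (norm_nonneg _)).1 (mod_cast hinner)

theorem swap_isometry_X_intertwine_general {H : Type*} [NormedAddCommGroup H]
    [InnerProductSpace ℂ H]
    (Zt Xt : H →ₗ[ℂ] H) (hXt : Xt.IsSymmetric)
    (hXsq : Xt * Xt = 1) (ψ : H) :
    ‖VL Zt Xt (Xt ψ) - Xsig (VL Zt Xt ψ)‖ ^ 2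
      = ‖(Pb0 Zt * Xt - Xt * Pb1 Zt) ψ‖ ^ 2 + ‖(Pb1 Zt * Xt - Xt * Pb0 Zt) ψ‖ ^ 2 := by
  have hfst : (VL Zt Xt (Xt ψ) - Xsig (VL Zt Xt ψ)).fst
      = (Pb0 Zt * Xt - Xt * Pb1 Zt) ψ := rfl
  have hsnd : (VL Zt Xt (Xt ψ) - Xsig (VL Zt Xt ψ)).snd
      = Xt ((Pb1 Zt * Xt - Xt * Pb0 Zt) ψ) := calc
    _ = Xt (Pb1 Zt (Xt ψ)) - Pb0 Zt ψ := rfl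
    _ = Xt ((Pb1 Zt * Xt - Xt * Pb0 Zt) ψ) := by
      rw [LinearMap.sub_apply, map_sub, Module.End.mul_apply, Module.End.mul_apply,
        ← Module.End.mul_apply Xt Xt, hXsq, Module.End.one_apply]
  rw [WithLp.prod_norm_sq_eq_of_L2, hfst, hsnd, hXt.norm_map_of_mul_self_eq_one hXsq]

/-- For every `ψ ∈ H`,
`‖V X̃ ψ − (σ_X ⊗ 1) V ψ‖² = ‖(P⁰X̃ − X̃P¹)ψ‖² + ‖(P¹X̃ − X̃P⁰)ψ‖²`. -/
theorem swap_isometry_X_intertwine {H : Type*} [NormedAddCommGroup H]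
    [InnerProductSpace ℂ H] [FiniteDimensional ℂ H]
    (Zt Xt : H →ₗ[ℂ] H) (hZt : Zt.IsSymmetric) (hXt : Xt.IsSymmetric)
    (hZsq : Zt * Zt = 1) (hXsq : Xt * Xt = 1) (ψ : H) :
    ‖VL Zt Xt (Xt ψ) - Xsig (VL Zt Xt ψ)‖ ^ 2
      = ‖(Pb0 Zt * Xt - Xt * Pb1 Zt) ψ‖ ^ 2 + ‖(Pb1 Zt * Xt - Xt * Pb0 Zt) ψ‖ ^ 2 :=
  swap_isometry_X_intertwine_general Zt Xt hXt hXsq ψ
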